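/- Let λ be a pre-averaging function. There exists a constant C depending only on λ such that for all integers 1 ≤ m ≤ n and all 2 ≤ i ≤ m, |Σ_{j: j/n ∈ ((i−2)/m, i/m]} λ̃(m·j/n − (i−2))| ≤ C. -/

import Mathlib

open MeasureTheory ProbabilityTheory Real

/-- `λ̄ := (2∫₀¹ (∫₀ˢ λ(u) du)² ds)^{1/2}`. -/
noncomputable def lamBar (lam : ℝ → ℝ) : ℝ :=
  Real.sqrt (2 * ∫ s in (0:ℝ)..1, (∫ u in (0:ℝ)..s, lam u) ^ 2)

/-- The normalized pre-averaging function `λ̃ := λ / λ̄`. -/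
noncomputable def lamTilde (lam : ℝ → ℝ) (t : ℝ) : ℝ := lam t / lamBar lam

/-- A pre-averaging function: `λ : [0,2) → ℝ` (extended by `0` outside `[0,2)`)
piecewise Lipschitz, antisymmetric `λ(t) = −λ(2−t)` on `(0,2)`, not identically
zero. -/
def IsPreAveraging (lam : ℝ → ℝ) : Prop :=
  (∀ t : ℝ, t < 0 ∨ 2 ≤ t → lam t = 0) ∧
  (∀ t ∈ Set.Ioo (0:ℝ) 2, lam t = - lam (2 - t)) ∧
  (∃ (N : ℕ) (a : ℕ → ℝ), 0 < N ∧ a 0 = 0 ∧ a N = 2 ∧ (∀ i < N, a i < a (i + 1)) ∧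
    ∀ i < N, ∃ K : NNReal, LipschitzOnWith K lam (Set.Ioo (a i) (a (i + 1)))) ∧
  (∃ t, lam t ≠ 0)

/-- `Λ(s) := (∫ₛ² λ̃(u) du)·1_{[0,2]}(s)`. -/
noncomputable def bigLambda (lam : ℝ → ℝ) (s : ℝ) : ℝ :=
  Set.indicator (Set.Icc (0:ℝ) 2) (fun s' => ∫ u in s'..2, lamTilde lam u) s

/-- `Λ̄(s) := ((∫₀ˢ λ̃)² + (∫₀^{1−s} λ̃)²)^{1/2}·1_{[0,1]}(s)`. -/
noncomputable def bigLambdaBar (lam : ℝ → ℝ) (s : ℝ) : ℝ :=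
  Set.indicator (Set.Icc (0:ℝ) 1)
    (fun s' => Real.sqrt ((∫ u in (0:ℝ)..s', lamTilde lam u) ^ 2 +
      (∫ u in (0:ℝ)..(1 - s'), lamTilde lam u) ^ 2)) s

open Classical in
/-- The indices `j ∈ {0,…,n}` with `j/n ∈ ((i−2)/m, i/m]`. -/
noncomputable def window (n m i : ℕ) : Finset ℕ :=
  (Finset.range (n + 1)).filter
    (fun j => ((i : ℝ) - 2) / m < (j : ℝ) / n ∧ (j : ℝ) / n ≤ (i : ℝ) / m)

/-- The grid norm `|g|_{p,m} := (m⁻¹ Σ_{i=1}^m |g((i−1)/m)|^p)^{1/p}`. -/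
noncomputable def gridNorm (g : ℝ → ℝ) (p : ℝ) (m : ℕ) : ℝ :=
  ((m : ℝ)⁻¹ * ∑ i ∈ Finset.Icc 1 m, |g (((i : ℝ) - 1) / m)| ^ p) ^ (1 / p)

/-!
The arguments `t_j = h j - c` (`h = m/n ≤ 1`, `c = i - 2`) of the window are the grid points in
`(0, 2]`, indexed by an integer interval `(A, B]`. The reflection `j ↦ A + B + 1 - j` permutes the
window and sends `t_j` to `2 - t_j + δ` with `|δ| ≤ h`. By antisymmetry,
`λ(t_j) + λ(2 - t_j + δ) = λ(u + δ) - λ(u)` with `u = 2 - t_j`, which is at most `K h` unless a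
breakpoint of `λ` lies within `h` of `u`, and at most `2 sup |λ|` in any case. The window has at
most `3/h` points and each of the `N + 1` breakpoints lies within `h` of at most three of the
`u`'s, so twice the sum is at most `3K + 6 (N + 1) sup |λ|`.
-/

open Finset

theorem exists_eq_or_mem_Ioo_of_mem_Ico {α : Type*} [LinearOrder α] (a : ℕ → α) {N : ℕ}
    {u : α} (hu : u ∈ Set.Ico (a 0) (a N)) :
    (∃ k < N, a k = u) ∨ ∃ k < N, u ∈ Set.Ioo (a k) (a (k + 1)) := by
  induction N with
  | zero => exact absurd hu (by simp)
  | succ N ih =>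
    rcases lt_or_ge u (a N) with hlt | hge
    · rcases ih ⟨hu.1, hlt⟩ with ⟨k, hk, h⟩ | ⟨k, hk, h⟩
      · exact .inl ⟨k, by omega, h⟩
      · exact .inr ⟨k, by omega, h⟩
    · rcases hge.eq_or_lt with h | h
      · exact .inl ⟨N, by omega, h⟩
      · exact .inr ⟨N, by omega, h, hu.2⟩

theorem LipschitzOnWith.isBounded_image {α β : Type*} [PseudoMetricSpace α]
    [PseudoMetricSpace β] {K : NNReal} {f : α → β} {s : Set α} (hf : LipschitzOnWith K f s)
    (hs : Bornology.IsBounded s) : Bornology.IsBounded (f '' s) := by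
  obtain ⟨C, hC⟩ := Metric.isBounded_iff.1 hs
  exact Metric.isBounded_image_iff.2 ⟨K * C, fun x hx y hy =>
    (hf.dist_le_mul x hx y hy).trans (by gcongr; exact hC hx hy)⟩

theorem LipschitzOnWith.div_const {K : NNReal} {f : ℝ → ℝ} {s : Set ℝ}
    (hf : LipschitzOnWith K f s) (L : ℝ) :
    LipschitzOnWith (‖L⁻¹‖₊ * K) (fun t => f t / L) s := by
  convert (lipschitzWith_smul L⁻¹).comp_lipschitzOnWith hf using 1
  · rfl
  · funext t
    exact div_eq_inv_mul _ _

theorem exists_forall_lipschitzOnWith {α β : Type*} [PseudoEMetricSpace α]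
    [PseudoEMetricSpace β] {f : α → β} {s : ℕ → Set α} {N : ℕ}
    (h : ∀ k < N, ∃ K, LipschitzOnWith K f (s k)) :
    ∃ K, ∀ k < N, LipschitzOnWith K f (s k) := by
  choose! K hK using h
  exact ⟨(range N).sup K, fun k hk => (hK k hk).weaken (le_sup (mem_range.2 hk))⟩

theorem isBounded_image_Ico_of_lipschitzOnWith_Ioo {β : Type*} [PseudoMetricSpace β]
    {f : ℝ → β} {a : ℕ → ℝ} {N : ℕ}
    (hlip : ∀ k < N, ∃ K, LipschitzOnWith K f (Set.Ioo (a k) (a (k + 1)))) :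
    Bornology.IsBounded (f '' Set.Ico (a 0) (a N)) := by
  have hpieces : Bornology.IsBounded (⋃ k ∈ range N, f '' Set.Ioo (a k) (a (k + 1))) :=
    (Bornology.isBounded_biUnion_finset _).2 fun k hk =>
      (hlip k (mem_range.1 hk)).choose_spec.isBounded_image (Metric.isBounded_Ioo _ _)
  refine (hpieces.union ((((range N).finite_toSet.image a).image f).isBounded)).subset ?_
  rintro _ ⟨t, ht, rfl⟩
  rcases exists_eq_or_mem_Ioo_of_mem_Ico a ht with ⟨k, hk, rfl⟩ | ⟨k, hk, htk⟩
  · exact .inr ⟨a k, ⟨k, mem_range.2 hk, rfl⟩, rfl⟩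
  · exact .inl (Set.mem_biUnion (mem_range.2 hk) ⟨t, htk, rfl⟩)

theorem exists_forall_abs_le_of_lipschitzOnWith_Ioo {f : ℝ → ℝ} {a : ℕ → ℝ} {N : ℕ}
    (hzero : ∀ t, t < a 0 ∨ a N ≤ t → f t = 0)
    (hlip : ∀ k < N, ∃ K, LipschitzOnWith K f (Set.Ioo (a k) (a (k + 1)))) :
    ∃ M, ∀ t, |f t| ≤ M := by
  obtain ⟨C, hC⟩ :=
    isBounded_iff_forall_norm_le.1 (isBounded_image_Ico_of_lipschitzOnWith_Ioo hlip)
  refine ⟨max C 0, fun t => ?_⟩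
  by_cases ht : t ∈ Set.Ico (a 0) (a N)
  · exact (hC _ ⟨t, ht, rfl⟩).trans (le_max_left _ _)
  · rw [hzero t (by rw [Set.mem_Ico, not_and_or, not_le, not_lt] at ht; exact ht), abs_zero]
    exact le_max_right _ _

theorem card_filter_abs_mul_sub_sub_le_le_three (W : Finset ℕ) {h : ℝ} (hh : 0 < h) (c y : ℝ) :
    #(W.filter fun j : ℕ => |h * j - c - y| ≤ h) ≤ 3 := by
  set j₀ := ⌈(c + y) / h - 1⌉₊
  calc #(W.filter fun j : ℕ => |h * j - c - y| ≤ h) ≤ #(Icc j₀ (j₀ + 2)) :=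
        card_le_card fun j hj => ?_
    _ = 3 := by simp only [Nat.card_Icc]; omega
  obtain ⟨hlo, hhi⟩ := abs_le.1 (mem_filter.1 hj).2
  have hj₀ : (c + y) / h - 1 ≤ j₀ := Nat.le_ceil _
  rw [mem_Icc, Nat.ceil_le, ← Nat.cast_le (α := ℝ), Nat.cast_add, Nat.cast_two,
    div_sub_one hh.ne', div_le_iff₀ hh]
  rw [div_sub_one hh.ne', div_le_iff₀ hh] at hj₀
  constructor <;> nlinarith

theorem card_filter_exists_abs_mul_sub_sub_le_le {ι : Type*} [DecidableEq ι] (W : Finset ℕ)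
    (s : Finset ι) {h : ℝ} (hh : 0 < h) (c : ℝ) (y : ι → ℝ) :
    #(W.filter fun j : ℕ => ∃ k ∈ s, |h * j - c - y k| ≤ h) ≤ 3 * #s :=
  calc #(W.filter fun j : ℕ => ∃ k ∈ s, |h * j - c - y k| ≤ h)
      ≤ #(s.biUnion fun k => W.filter fun j : ℕ => |h * j - c - y k| ≤ h) :=
        card_le_card fun j hj => by
          obtain ⟨hjW, k, hk, hjk⟩ := mem_filter.1 hj
          exact mem_biUnion.2 ⟨k, hk, mem_filter.2 ⟨hjW, hjk⟩⟩
    _ ≤ ∑ k ∈ s, #(W.filter fun j : ℕ => |h * j - c - y k| ≤ h) := card_biUnion_le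
    _ ≤ ∑ _k ∈ s, 3 := sum_le_sum fun k _ => card_filter_abs_mul_sub_sub_le_le_three W hh c (y k)
    _ = 3 * #s := by rw [sum_const, smul_eq_mul, mul_comm]

theorem sum_Ioc_reflect {M : Type*} [AddCommMonoid M] (g : ℕ → M) (A B : ℕ) :
    ∑ j ∈ Ioc A B, g (A + B + 1 - j) = ∑ j ∈ Ioc A B, g j :=
  sum_nbij' (fun j => A + B + 1 - j) (fun j => A + B + 1 - j)
    (fun j hj => by simp only [mem_Ioc] at hj ⊢; omega)
    (fun j hj => by simp only [mem_Ioc] at hj ⊢; omega)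
    (fun j hj => by simp only [mem_Ioc] at hj; omega)
    (fun j hj => by simp only [mem_Ioc] at hj; omega)
    (fun _ _ => rfl)

theorem mul_floor_div_mem_Ioc {h x : ℝ} (hh : 0 < h) (hx : 0 ≤ x) :
    h * ⌊x / h⌋₊ ∈ Set.Ioc (x - h) x := by
  have hlo := Nat.lt_floor_add_one (x / h)
  have hhi := Nat.floor_le (div_nonneg hx hh.le)
  rw [div_lt_iff₀ hh] at hlo
  rw [le_div_iff₀ hh] at hhi
  constructor <;> linarith

theorem mem_Ioc_floor_div_iff {h c : ℝ} (hh : 0 < h) (hc : 0 ≤ c) (j : ℕ) :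
    j ∈ Ioc ⌊c / h⌋₊ ⌊(c + 2) / h⌋₊ ↔ c < h * j ∧ h * j ≤ c + 2 := by
  rw [mem_Ioc, Nat.floor_lt (div_nonneg hc hh.le), Nat.le_floor_iff (by positivity),
    div_lt_iff₀ hh, le_div_iff₀ hh, mul_comm h]

section Reflection

variable {f : ℝ → ℝ} {a : ℕ → ℝ} {N : ℕ} {K : NNReal}

theorem abs_add_reflect_le_of_forall_notMem_uIcc
    (hanti : ∀ t ∈ Set.Ioo (0 : ℝ) 2, f t = -f (2 - t)) (ha0 : a 0 = 0) (haN : a N = 2)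
    (hlip : ∀ k < N, LipschitzOnWith K f (Set.Ioo (a k) (a (k + 1))))
    {t δ : ℝ} (ht : t ∈ Set.Ioc (0 : ℝ) 2)
    (hgood : ∀ k ≤ N, a k ∉ Set.uIcc (2 - t) (2 - t + δ)) :
    |f t + f (2 - t + δ)| ≤ K * |δ| := by
  have ht2 : t < 2 := ht.2.lt_of_ne fun h => hgood 0 N.zero_le (by
    rw [ha0, h, sub_self]; exact Set.left_mem_uIcc)
  rcases exists_eq_or_mem_Ioo_of_mem_Ico a
      (show 2 - t ∈ Set.Ico (a 0) (a N) by rw [ha0, haN]; constructor <;> linarith [ht.1])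
    with ⟨k, hk, hak⟩ | ⟨k, hk, huk⟩
  · exact absurd (hak ▸ Set.left_mem_uIcc) (hgood k hk.le)
  have hvk : 2 - t + δ ∈ Set.Ioo (a k) (a (k + 1)) := by
    constructor
    · by_contra! h
      exact hgood k hk.le (Set.mem_uIcc.2 (.inr ⟨h, huk.1.le⟩))
    · by_contra! h
      exact hgood (k + 1) hk (Set.mem_uIcc.2 (.inl ⟨huk.2.le, h⟩))
  have hdist := (hlip k hk).dist_le_mul _ hvk _ huk
  rwa [Real.dist_eq, Real.dist_eq, add_sub_cancel_left, ← neg_add_eq_sub,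
    ← hanti t ⟨ht.1, ht2⟩] at hdist

theorem abs_add_reflect_le {M : ℝ} (hM : ∀ t, |f t| ≤ M)
    (hanti : ∀ t ∈ Set.Ioo (0 : ℝ) 2, f t = -f (2 - t)) (ha0 : a 0 = 0) (haN : a N = 2)
    (hlip : ∀ k < N, LipschitzOnWith K f (Set.Ioo (a k) (a (k + 1))))
    {t δ h : ℝ} (ht : t ∈ Set.Ioc (0 : ℝ) 2) (hδ : |δ| ≤ h) :
    |f t + f (2 - t + δ)| ≤
      (if ∃ k ∈ range (N + 1), |t - (2 - a k)| ≤ h then 2 * M else 0) + K * h := by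
  have hKh : K * |δ| ≤ K * h := mul_le_mul_of_nonneg_left hδ K.coe_nonneg
  split_ifs with hbad
  · linarith [abs_add_le (f t) (f (2 - t + δ)), hM t, hM (2 - t + δ),
      mul_nonneg K.coe_nonneg ((abs_nonneg δ).trans hδ)]
  · refine (abs_add_reflect_le_of_forall_notMem_uIcc hanti ha0 haN hlip ht ?_).trans (by linarith)
    intro k hk hmem
    refine hbad ⟨k, mem_range.2 (by omega), ?_⟩
    rw [show t - (2 - a k) = a k - (2 - t) by ring]
    exact (Set.abs_sub_left_of_mem_uIcc hmem).trans (by rwa [add_sub_cancel_left])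

theorem abs_sum_Ioc_floor_div_le {M : ℝ} (hM : ∀ t, |f t| ≤ M)
    (hanti : ∀ t ∈ Set.Ioo (0 : ℝ) 2, f t = -f (2 - t)) (ha0 : a 0 = 0) (haN : a N = 2)
    (hlip : ∀ k < N, LipschitzOnWith K f (Set.Ioo (a k) (a (k + 1))))
    {h c : ℝ} (hh : 0 < h) (hh1 : h ≤ 1) (hc : 0 ≤ c) :
    |∑ j ∈ Ioc ⌊c / h⌋₊ ⌊(c + 2) / h⌋₊, f (h * j - c)| ≤ 3 * M * (N + 1) + 2 * K := by
  set A := ⌊c / h⌋₊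
  set B := ⌊(c + 2) / h⌋₊
  obtain ⟨hA₁, hA₂⟩ := mul_floor_div_mem_Ioc hh hc
  obtain ⟨hB₁, hB₂⟩ := mul_floor_div_mem_Ioc hh (by linarith : 0 ≤ c + 2)
  set δ : ℝ := h * (A + B + 1) - 2 * c - 2
  have hδ : |δ| ≤ h := abs_le.2 ⟨by linarith, by linarith⟩
  set bad : ℕ → Prop := fun j => ∃ k ∈ range (N + 1), |h * j - c - (2 - a k)| ≤ h
  have hpair : ∀ j ∈ Ioc A B, |f (h * j - c) + f (h * ((A + B + 1 - j : ℕ) : ℝ) - c)| ≤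
      (if bad j then 2 * M else 0) + K * h := by
    intro j hj
    obtain ⟨hj₁, hj₂⟩ := (mem_Ioc_floor_div_iff hh hc j).1 hj
    rw [mem_Ioc] at hj
    have hreflect : h * ((A + B + 1 - j : ℕ) : ℝ) - c = 2 - (h * j - c) + δ := by
      push_cast [Nat.cast_sub (show j ≤ A + B + 1 by omega)]
      ring
    rw [hreflect]
    exact abs_add_reflect_le hM hanti ha0 haN hlip ⟨by linarith, by linarith⟩ hδ
  have hbadcard : (#((Ioc A B).filter bad) : ℝ) ≤ 3 * (N + 1) := by
    exact_mod_cast (card_filter_exists_abs_mul_sub_sub_le_le _ _ hh c fun k => 2 - a k).trans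
      (by rw [card_range])
  have hcard : (#(Ioc A B) : ℝ) * h ≤ 3 := by
    rw [Nat.card_Ioc, Nat.cast_sub (Nat.cast_le.1 (by nlinarith : (A : ℝ) ≤ B))]
    nlinarith
  have hM0 : 0 ≤ M := (abs_nonneg _).trans (hM 0)
  suffices 2 * |∑ j ∈ Ioc A B, f (h * j - c)| ≤ 6 * M * (N + 1) + 3 * K by linarith
  calc 2 * |∑ j ∈ Ioc A B, f (h * j - c)|
      = |∑ j ∈ Ioc A B, (f (h * j - c) + f (h * ((A + B + 1 - j : ℕ) : ℝ) - c))| := by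
        rw [sum_add_distrib, sum_Ioc_reflect (fun j : ℕ => f (h * j - c)), ← two_mul, abs_mul,
          abs_two]
    _ ≤ ∑ j ∈ Ioc A B, ((if bad j then 2 * M else 0) + K * h) :=
        (abs_sum_le_sum_abs _ _).trans (sum_le_sum hpair)
    _ = #((Ioc A B).filter bad) * (2 * M) + K * (#(Ioc A B) * h) := by
        rw [sum_add_distrib, sum_ite, sum_const_zero, add_zero, sum_const, sum_const,
          nsmul_eq_mul, nsmul_eq_mul]
        ring
    _ ≤ 6 * M * (N + 1) + 3 * K := by nlinarith [K.coe_nonneg]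

end Reflection

theorem exists_abs_sum_Ioc_floor_div_le {f : ℝ → ℝ} {a : ℕ → ℝ} {N : ℕ}
    (hzero : ∀ t : ℝ, t < 0 ∨ 2 ≤ t → f t = 0)
    (hanti : ∀ t ∈ Set.Ioo (0 : ℝ) 2, f t = -f (2 - t)) (ha0 : a 0 = 0) (haN : a N = 2)
    (hlip : ∀ k < N, ∃ K, LipschitzOnWith K f (Set.Ioo (a k) (a (k + 1)))) :
    ∃ C, 0 < C ∧ ∀ h c : ℝ, 0 < h → h ≤ 1 → 0 ≤ c →
      |∑ j ∈ Ioc ⌊c / h⌋₊ ⌊(c + 2) / h⌋₊, f (h * j - c)| ≤ C := by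
  obtain ⟨M, hM⟩ := exists_forall_abs_le_of_lipschitzOnWith_Ioo (by rwa [ha0, haN]) hlip
  obtain ⟨K, hK⟩ := exists_forall_lipschitzOnWith hlip
  have hM0 : 0 ≤ M := (abs_nonneg _).trans (hM 0)
  refine ⟨3 * M * (N + 1) + 2 * K + 1, by positivity, fun h c hh hh1 hc => ?_⟩
  linarith [abs_sum_Ioc_floor_div_le hM hanti ha0 haN hK hh hh1 hc]

theorem window_eq_Ioc_floor {n m i : ℕ} (hm : 1 ≤ m) (hmn : m ≤ n) (hi : 2 ≤ i)
    (him : i ≤ m) :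
    window n m i = Ioc ⌊((i : ℝ) - 2) / (m / n)⌋₊ ⌊((i : ℝ) - 2 + 2) / (m / n)⌋₊ := by
  have hm0 : (0 : ℝ) < m := by exact_mod_cast hm
  have hn0 : (0 : ℝ) < n := by exact_mod_cast hm.trans hmn
  ext j
  rw [mem_Ioc_floor_div_iff (by positivity) (by rw [sub_nonneg]; exact_mod_cast hi),
    sub_add_cancel, window, mem_filter, mem_range, div_lt_div_iff₀ hm0 hn0,
    div_le_div_iff₀ hn0 hm0, div_mul_eq_mul_div, lt_div_iff₀ hn0, div_le_iff₀ hn0,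
    mul_comm (m : ℝ)]
  constructor
  · rintro ⟨-, hlo, hhi⟩
    constructor <;> linarith
  · rintro ⟨hlo, hhi⟩
    refine ⟨?_, by linarith, by linarith⟩
    have : (j : ℝ) * m ≤ n * m := by nlinarith [(Nat.cast_le (α := ℝ)).2 him]
    exact Nat.lt_succ_of_le (by exact_mod_cast le_of_mul_le_mul_right this hm0)

theorem riemann_sum_lamTilde_bound (lam : ℝ → ℝ) (hlam : IsPreAveraging lam) :
    ∃ C : ℝ, 0 < C ∧ ∀ m n i : ℕ, 1 ≤ m → m ≤ n → 2 ≤ i → i ≤ m →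
      |∑ j ∈ window n m i, lamTilde lam ((m : ℝ) * j / n - ((i : ℝ) - 2))|
        ≤ C := by
  obtain ⟨hzero, hanti, ⟨N, a, -, ha0, haN, -, hlip⟩, -⟩ := hlam
  obtain ⟨C, hC, hbound⟩ := exists_abs_sum_Ioc_floor_div_le (f := lamTilde lam)
    (fun t ht => by simp [lamTilde, hzero t ht])
    (fun t ht => by simp [lamTilde, hanti t ht, neg_div])
    ha0 haN fun k hk => let ⟨_, hK⟩ := hlip k hk; ⟨_, hK.div_const _⟩
  refine ⟨C, hC, fun m n i hm hmn hi him => ?_⟩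
  have hm0 : (0 : ℝ) < m := by exact_mod_cast hm
  have hn0 : (0 : ℝ) < n := by exact_mod_cast hm.trans hmn
  rw [window_eq_Ioc_floor hm hmn hi him]
  simpa only [mul_div_right_comm] using hbound (m / n) (i - 2) (by positivity)
    ((div_le_one hn0).2 (by exact_mod_cast hmn)) (by rw [sub_nonneg]; exact_mod_cast hi)
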